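/- arXiv:1807.08487 — 4 statements merged into one kernel-verified Lean document; each statement's English description precedes it below -/
import Mathlib

section
/- Global mintermisation preserves the concrete transition relation: replacing each transition (p, φ, q) by the transitions (p, ω, q) for all minterms ω of the set of all transition predicates with ⟦ω⟧ ∩ ⟦φ⟧ ≠ ∅ yields an SFA with the same set of concrete transitions ⟦Δ⟧ = ⟦Δ_G⟧. -/
/-!
The minterms of `PD` are the atoms of the Boolean algebra generated by `PD`: every letter `a`
lies in the minterm of the predicates of `PD` it satisfies, and a minterm meeting some `φ ∈ PD`
is contained in `φ`. So every concrete transition `(p, a, q)` of `Δ` survives through that minterm,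
and a minterm transition coming from `(p, φ, q)` only carries letters of `φ`.
-/

/-- An effective Boolean algebra over domain `D` with predicates `P`. -/
structure EBA (D P : Type) where
  denote : P → Set D
  disj : P → P → P
  conj : P → P → P
  neg : P → P
  top : P
  bot : P
  denote_disj : ∀ φ ψ, denote (disj φ ψ) = denote φ ∪ denote ψ
  denote_conj : ∀ φ ψ, denote (conj φ ψ) = denote φ ∩ denote ψ
  denote_neg : ∀ φ, denote (neg φ) = (denote φ)ᶜ
  denote_top : denote top = Set.univ
  denote_bot : denote bot = ∅

/-- Conjunction of a list of predicates. -/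
def EBA.bigConj {D P : Type} (A : EBA D P) : List P → P
  | [] => A.top
  | φ :: l => A.conj φ (A.bigConj l)

/-- The minterm of `Φ` determined by the subset `Φ' ⊆ Φ`:
`⋀_{φ∈Φ'} φ ∧ ⋀_{φ∈Φ∖Φ'} ¬φ`. -/
noncomputable def EBA.mintermOf {D P : Type} [DecidableEq P] (A : EBA D P) (Φ Φ' : Finset P) : P :=
  A.conj (A.bigConj Φ'.toList) (A.bigConj ((Φ \ Φ').toList.map A.neg))

/-- The globally mintermised transition relation: each `(p,φ,q) ∈ Δ` is replaced
by `(p,ω,q)` for all minterms `ω` of the set `PD` of all transition predicates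
with `⟦ω⟧ ∩ ⟦φ⟧ ≠ ∅`. -/
def globalMinterms {Q D P : Type} [DecidableEq P] (A : EBA D P)
    (Δ : Set (Q × P × Q)) (PD : Finset P) : Set (Q × P × Q) :=
  {y | ∃ (φ : P) (Φ' : Finset P), (y.1, φ, y.2.2) ∈ Δ ∧ Φ' ⊆ PD ∧
    y.2.1 = A.mintermOf PD Φ' ∧ (A.denote y.2.1).Nonempty ∧
    (A.denote y.2.1 ∩ A.denote φ).Nonempty}

namespace EBA

variable {D P : Type} (A : EBA D P)

theorem mem_denote_bigConj (l : List P) (a : D) :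
    a ∈ A.denote (A.bigConj l) ↔ ∀ φ ∈ l, a ∈ A.denote φ := by
  induction l with
  | nil => simp [bigConj, A.denote_top]
  | cons φ l ih => simp [bigConj, A.denote_conj, ih]

variable [DecidableEq P]

theorem mem_denote_mintermOf (Φ Φ' : Finset P) (a : D) :
    a ∈ A.denote (A.mintermOf Φ Φ') ↔
      (∀ φ ∈ Φ', a ∈ A.denote φ) ∧ ∀ φ ∈ Φ \ Φ', a ∉ A.denote φ := by
  simp only [mintermOf, A.denote_conj, Set.mem_inter_iff, mem_denote_bigConj, List.forall_mem_map,
    Finset.mem_toList, A.denote_neg, Set.mem_compl_iff]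

theorem exists_mem_denote_mintermOf (Φ : Finset P) (a : D) :
    ∃ Φ' ⊆ Φ, a ∈ A.denote (A.mintermOf Φ Φ') := by
  classical
  refine ⟨Φ.filter (a ∈ A.denote ·), Finset.filter_subset _ _, ?_⟩
  rw [mem_denote_mintermOf]
  constructor
  · intro φ hφ
    exact (Finset.mem_filter.mp hφ).2
  · intro φ hφ ha
    obtain ⟨hφΦ, hφΦ'⟩ := Finset.mem_sdiff.mp hφ
    exact hφΦ' (Finset.mem_filter.mpr ⟨hφΦ, ha⟩)

theorem denote_mintermOf_subset {Φ Φ' : Finset P} {φ : P} (hφ : φ ∈ Φ)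
    (hmeet : (A.denote (A.mintermOf Φ Φ') ∩ A.denote φ).Nonempty) :
    A.denote (A.mintermOf Φ Φ') ⊆ A.denote φ := by
  obtain ⟨b, hbω, hbφ⟩ := hmeet
  have hφΦ' : φ ∈ Φ' := by
    by_contra hφΦ'
    exact ((A.mem_denote_mintermOf Φ Φ' b).mp hbω).2 φ (Finset.mem_sdiff.mpr ⟨hφ, hφΦ'⟩) hbφ
  intro a ha
  exact ((A.mem_denote_mintermOf Φ Φ' a).mp ha).1 φ hφΦ'

end EBA

theorem globalMinterms_preserves_concrete_general {Q D P : Type} [DecidableEq P]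
    (A : EBA D P) (Δ : Set (Q × P × Q)) (PD : Finset P)
    (hPD : ↑PD = {φ : P | ∃ p q, (p, φ, q) ∈ Δ}) :
    {x : Q × D × Q | ∃ ψ, (x.1, ψ, x.2.2) ∈ Δ ∧ x.2.1 ∈ A.denote ψ} =
    {x : Q × D × Q | ∃ ω, (x.1, ω, x.2.2) ∈ globalMinterms A Δ PD ∧
      x.2.1 ∈ A.denote ω} := by
  ext ⟨p, a, q⟩
  constructor
  · rintro ⟨ψ, hψ, ha⟩
    obtain ⟨Φ', hΦ', haω⟩ := A.exists_mem_denote_mintermOf PD a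
    exact ⟨_, ⟨ψ, Φ', hψ, hΦ', rfl, ⟨a, haω⟩, ⟨a, haω, ha⟩⟩, haω⟩
  · rintro ⟨ω, ⟨φ, Φ', hφ, -, rfl, -, hmeet⟩, ha⟩
    have hφPD : φ ∈ PD := by
      rw [← Finset.mem_coe, hPD]
      exact ⟨p, q, hφ⟩
    exact ⟨φ, hφ, A.denote_mintermOf_subset hφPD hmeet ha⟩

/-- Global mintermisation preserves the concrete transition relation. -/
theorem globalMinterms_preserves_concrete {Q D P : Type} [DecidableEq P]
    (A : EBA D P) (Δ : Set (Q × P × Q)) (PD : Finset P)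
    (hPD : ↑PD = {φ : P | ∃ p q, (p, φ, q) ∈ Δ})
    (hsat : ∀ p φ q, (p, φ, q) ∈ Δ → (A.denote φ).Nonempty) :
    {x : Q × D × Q | ∃ ψ, (x.1, ψ, x.2.2) ∈ Δ ∧ x.2.1 ∈ A.denote ψ} =
    {x : Q × D × Q | ∃ ω, (x.1, ω, x.2.2) ∈ globalMinterms A Δ PD ∧
      x.2.1 ∈ A.denote ω} :=
  globalMinterms_preserves_concrete_general A Δ PD hPD
end

section
/- Let M be a globally mintermised SFA and N its syntactic NFA over the alphabet of transition predicates (predicates treated as letters). Then a relation R ⊆ Q × Q is a simulation on M if and only if R is a simulation on N; consequently, the maximal simulation on M equals the maximal simulation on N. -/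
/-- A symbolic finite automaton: states `Q`, domain `D`, predicates `P`
with denotation `denote`, symbolic transitions `Δ`, initial and final states. -/
structure SFA (Q D P : Type) where
  denote : P → Set D
  Δ : Set (Q × P × Q)
  I : Set Q
  F : Set Q

/-- Concrete transition `q →a p`. -/
def SFA.Move {Q D P : Type} (M : SFA Q D P) (q : Q) (a : D) (p : Q) : Prop :=
  ∃ ψ, (q, ψ, p) ∈ M.Δ ∧ a ∈ M.denote ψ

/-- `S` is a simulation on `M`. -/
def SFA.IsSimulation {Q D P : Type} (M : SFA Q D P) (S : Set (Q × Q)) : Prop :=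
  ∀ p r, (p, r) ∈ S →
    (p ∈ M.F → r ∈ M.F) ∧
    ∀ a p', M.Move p a p' → ∃ r', M.Move r a r' ∧ (p', r') ∈ S

/-- `S` is a simulation on the syntactic NFA of `M` (predicates treated as letters). -/
def SFA.IsSyntacticSimulation {Q D P : Type} (M : SFA Q D P) (S : Set (Q × Q)) : Prop :=
  ∀ p r, (p, r) ∈ S →
    (p ∈ M.F → r ∈ M.F) ∧
    ∀ ψ p', (p, ψ, p') ∈ M.Δ → ∃ r', (r, ψ, r') ∈ M.Δ ∧ (p', r') ∈ S


namespace SFA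

variable {Q D P : Type} (M : SFA Q D P)

theorem eq_of_mem_denote_of_mem_denote
    (hpart : ∀ φ ψ, φ ∈ {φ : P | ∃ p q, (p, φ, q) ∈ M.Δ} →
      ψ ∈ {φ : P | ∃ p q, (p, φ, q) ∈ M.Δ} → φ ≠ ψ →
      M.denote φ ∩ M.denote ψ = ∅)
    {p p' r r' : Q} {φ ψ : P} {a : D} (hφ : (p, φ, p') ∈ M.Δ) (hψ : (r, ψ, r') ∈ M.Δ)
    (haφ : a ∈ M.denote φ) (haψ : a ∈ M.denote ψ) : φ = ψ := by
  by_contra hne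
  exact (Set.eq_empty_iff_forall_notMem.mp (hpart φ ψ ⟨p, p', hφ⟩ ⟨r, r', hψ⟩ hne)) a ⟨haφ, haψ⟩

variable {M}

theorem IsSyntacticSimulation.isSimulation {R : Set (Q × Q)}
    (hR : M.IsSyntacticSimulation R) : M.IsSimulation R := by
  intro p r hpr
  obtain ⟨hF, hstep⟩ := hR p r hpr
  refine ⟨hF, ?_⟩
  rintro a p' ⟨ψ, hψ, ha⟩
  obtain ⟨r', hψ', hr'⟩ := hstep ψ p' hψ
  exact ⟨r', ⟨ψ, hψ', ha⟩, hr'⟩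

/-- A witness letter of `ψ` forces the answering transition to carry `ψ` itself, since no other
transition predicate contains that letter. -/
theorem IsSimulation.isSyntacticSimulation
    (hsat : ∀ p φ q, (p, φ, q) ∈ M.Δ → (M.denote φ).Nonempty)
    (hpart : ∀ φ ψ, φ ∈ {φ : P | ∃ p q, (p, φ, q) ∈ M.Δ} →
      ψ ∈ {φ : P | ∃ p q, (p, φ, q) ∈ M.Δ} → φ ≠ ψ →
      M.denote φ ∩ M.denote ψ = ∅)
    {R : Set (Q × Q)} (hR : M.IsSimulation R) : M.IsSyntacticSimulation R := by
  intro p r hpr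
  obtain ⟨hF, hstep⟩ := hR p r hpr
  refine ⟨hF, fun ψ p' hψ => ?_⟩
  obtain ⟨a, ha⟩ := hsat p ψ p' hψ
  obtain ⟨r', ⟨φ, hφ, haφ⟩, hr'⟩ := hstep a p' ⟨ψ, hψ, ha⟩
  obtain rfl := M.eq_of_mem_denote_of_mem_denote hpart hφ hψ haφ ha
  exact ⟨r', hφ, hr'⟩

end SFA

/-- On a globally mintermised SFA (transition predicates are satisfiable and
pairwise disjoint), a relation is a simulation on the SFA iff it is a
simulation on its syntactic NFA; consequently the maximal simulations coincide. -/
theorem globally_mintermised_sim_iff_syntactic_sim {Q D P : Type} (M : SFA Q D P)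
    (hsat : ∀ p φ q, (p, φ, q) ∈ M.Δ → (M.denote φ).Nonempty)
    (hpart : ∀ φ ψ, φ ∈ {φ : P | ∃ p q, (p, φ, q) ∈ M.Δ} →
      ψ ∈ {φ : P | ∃ p q, (p, φ, q) ∈ M.Δ} → φ ≠ ψ →
      M.denote φ ∩ M.denote ψ = ∅) :
    (∀ R : Set (Q × Q), M.IsSimulation R ↔ M.IsSyntacticSimulation R) ∧
    ⋃₀ {S | M.IsSimulation S} = ⋃₀ {S | M.IsSyntacticSimulation S} := by
  have hiff : ∀ R : Set (Q × Q), M.IsSimulation R ↔ M.IsSyntacticSimulation R := fun _ =>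
    ⟨SFA.IsSimulation.isSyntacticSimulation hsat hpart, SFA.IsSyntacticSimulation.isSimulation⟩
  exact ⟨hiff, congrArg Set.sUnion (Set.ext hiff)⟩
end

section
/- Local mintermisation preserves concrete transitions: for each state p, replacing every transition (p, φ, q) by the transitions (p, ω, q) for all minterms ω of the predicates on p's outgoing transitions with ⟦ω⟧ ∩ ⟦φ⟧ ≠ ∅ yields an SFA with ⟦Δ_L⟧ = ⟦Δ⟧. -/
/-- The locally mintermised transition relation: each `(p,φ,q) ∈ Δ` is replaced
by `(p,ω,q)` for all minterms `ω` of the predicates `PD p` on `p`'s outgoing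
transitions with `⟦ω⟧ ∩ ⟦φ⟧ ≠ ∅`. -/
def localMinterms {Q D P : Type} [DecidableEq P] (A : EBA D P)
    (Δ : Set (Q × P × Q)) (PD : Q → Finset P) : Set (Q × P × Q) :=
  {y | ∃ (φ : P) (Φ' : Finset P), (y.1, φ, y.2.2) ∈ Δ ∧ Φ' ⊆ PD y.1 ∧
    y.2.1 = A.mintermOf (PD y.1) Φ' ∧ (A.denote y.2.1).Nonempty ∧
    (A.denote y.2.1 ∩ A.denote φ).Nonempty}

/-!
Each minterm of `PD p` lies either inside or outside each predicate of `PD p`; so a minterm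
meeting `⟦φ⟧` is contained in it, which gives `⟦Δ_L⟧ ⊆ ⟦Δ⟧`. Conversely, a letter `a` with
`(p, a, q) ∈ ⟦Δ⟧` via `φ` lies in the minterm selecting exactly the predicates of `PD p` that
hold at `a`, and that minterm meets `⟦φ⟧` at `a`.
-/

namespace EBA

variable {D P : Type} (A : EBA D P)

variable [DecidableEq P]

theorem denote_mintermOf_subset_of_inter_nonempty {Φ Φ' : Finset P} {φ : P} (hφ : φ ∈ Φ)
    (hne : (A.denote (A.mintermOf Φ Φ') ∩ A.denote φ).Nonempty) :
    A.denote (A.mintermOf Φ Φ') ⊆ A.denote φ := by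
  obtain ⟨b, hbω, hbφ⟩ := hne
  by_cases hφ' : φ ∈ Φ'
  · exact fun a ha => ((A.mem_denote_mintermOf Φ Φ' a).1 ha).1 φ hφ'
  · exact absurd hbφ (((A.mem_denote_mintermOf Φ Φ' b).1 hbω).2 φ
      (Finset.mem_sdiff.2 ⟨hφ, hφ'⟩))

theorem mem_denote_mintermOf_filter (Φ : Finset P) (a : D) [DecidablePred (a ∈ A.denote ·)] :
    a ∈ A.denote (A.mintermOf Φ (Φ.filter (a ∈ A.denote ·))) := by
  rw [mem_denote_mintermOf]
  refine ⟨fun φ hφ => (Finset.mem_filter.1 hφ).2, fun φ hφ ha => ?_⟩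
  obtain ⟨hφΦ, hφ'⟩ := Finset.mem_sdiff.1 hφ
  exact hφ' (Finset.mem_filter.2 ⟨hφΦ, ha⟩)

end EBA

theorem localMinterms_preserves_concrete_general {Q D P : Type} [DecidableEq P]
    (A : EBA D P) (Δ : Set (Q × P × Q)) (PD : Q → Finset P)
    (hPD : ∀ p : Q, ↑(PD p) = {φ : P | ∃ q, (p, φ, q) ∈ Δ}) :
    {x : Q × D × Q | ∃ ψ, (x.1, ψ, x.2.2) ∈ localMinterms A Δ PD ∧ x.2.1 ∈ A.denote ψ} =
    {x : Q × D × Q | ∃ ψ, (x.1, ψ, x.2.2) ∈ Δ ∧ x.2.1 ∈ A.denote ψ} := by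
  classical
  have mem_PD : ∀ {p φ q}, (p, φ, q) ∈ Δ → φ ∈ PD p := fun {p φ q} h => by
    rw [← Finset.mem_coe, hPD p]
    exact ⟨q, h⟩
  ext ⟨p, a, q⟩
  simp only [localMinterms, Set.mem_ofPred_eq]
  constructor
  · rintro ⟨_, ⟨φ, Φ', hφ, -, rfl, -, hne⟩, ha⟩
    exact ⟨φ, hφ, A.denote_mintermOf_subset_of_inter_nonempty (mem_PD hφ) hne ha⟩
  · rintro ⟨φ, hφ, ha⟩
    have haω := A.mem_denote_mintermOf_filter (PD p) a
    exact ⟨_, ⟨φ, _, hφ, Finset.filter_subset _ _, rfl, ⟨a, haω⟩, ⟨a, haω, ha⟩⟩, haω⟩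

/-- Local mintermisation preserves the concrete transition relation. -/
theorem localMinterms_preserves_concrete {Q D P : Type} [DecidableEq P]
    (A : EBA D P) (Δ : Set (Q × P × Q)) (PD : Q → Finset P)
    (hPD : ∀ p : Q, ↑(PD p) = {φ : P | ∃ q, (p, φ, q) ∈ Δ})
    (hsat : ∀ p φ q, (p, φ, q) ∈ Δ → (A.denote φ).Nonempty) :
    {x : Q × D × Q | ∃ ψ, (x.1, ψ, x.2.2) ∈ localMinterms A Δ PD ∧ x.2.1 ∈ A.denote ψ} =
    {x : Q × D × Q | ∃ ψ, (x.1, ψ, x.2.2) ∈ Δ ∧ x.2.1 ∈ A.denote ψ} :=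
  localMinterms_preserves_concrete_general A Δ PD hPD
end

section
/- For any SFA, states s, t, i, and any relation R ⊆ Q × Q, the predicate φ_{si} ∧ ¬Γ_t(R(i)) is satisfiable if and only if there exists a symbol a ∈ D and a transition s →a i such that every j with t →a j satisfies (i, j) ∉ R. -/
/-- The denotation of `φ_{si}`, the disjunction of the predicates on transitions
from `s` to `i`. -/
def SFA.phiDenote {Q D P : Type} (M : SFA Q D P) (s i : Q) : Set D :=
  ⋃ ψ ∈ {ψ : P | (s, ψ, i) ∈ M.Δ}, M.denote ψ

/-- The denotation of `Γ_t(J)`, the disjunction of all predicates on transitions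
from `t` into `J`. -/
def SFA.gammaDenote {Q D P : Type} (M : SFA Q D P) (t : Q) (J : Set Q) : Set D :=
  ⋃ j ∈ J, M.phiDenote t j


namespace SFA

variable {Q D P : Type} (M : SFA Q D P)

theorem mem_phiDenote_iff {s i : Q} {a : D} : a ∈ M.phiDenote s i ↔ M.Move s a i := by
  simp only [phiDenote, Set.mem_iUnion, Set.mem_ofPred_eq, exists_prop, Move]

theorem mem_gammaDenote_iff {t : Q} {J : Set Q} {a : D} :
    a ∈ M.gammaDenote t J ↔ ∃ j ∈ J, M.Move t a j := by
  simp only [gammaDenote, Set.mem_iUnion, mem_phiDenote_iff, exists_prop]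

end SFA

/-- `φ_{si} ∧ ¬Γ_t(R(i))` is satisfiable iff there is a symbol `a` and a
transition `s →a i` such that every `j` with `t →a j` satisfies `(i,j) ∉ R`. -/
theorem sat_phi_and_neg_gamma_iff {Q D P : Type} (M : SFA Q D P) (s t i : Q)
    (R : Set (Q × Q)) :
    (M.phiDenote s i ∩ (M.gammaDenote t {j | (i, j) ∈ R})ᶜ).Nonempty ↔
    ∃ a : D, M.Move s a i ∧ ∀ j, M.Move t a j → (i, j) ∉ R := by
  simp only [Set.Nonempty, Set.mem_inter_iff, Set.mem_compl_iff, M.mem_phiDenote_iff,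
    M.mem_gammaDenote_iff, Set.mem_ofPred_eq, not_exists, not_and]
  exact exists_congr fun _ => and_congr_right fun _ => forall_congr' fun _ => imp_not_comm
end
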